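/- Let X be a δ-hyperbolic connected graph (δ ≥ 1). For every L ≥ 1 there exists s ≥ 0 such that for every C ≥ 0 there exists n with the following property: whenever x, y are vertices of X with d(x,y) ≥ n and α1, α2 are paths from x to y such that, with B = N_C({x,y}), every vertex of α1 outside B is at distance at least s from every vertex of α2 outside B, then either the length of α1 is at least L·d(x,y) or the length of α2 is at least L·d(x,y). -/

import Mathlib

/-!
Fix a geodesic `γ` from `x` to `y` and send every vertex to the index of a nearest point of `γ`.
In a `δ`-hyperbolic graph this projection moves by `O(δ)` along an edge, and it is strongly
contracting: a ball whose radius is smaller than its distance to `γ` minus `2δ` projects onto a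
segment of length `O(δ)`.

Take `s = 2r + 1`. For each position `τ` of `γ` at distance more than `C + r` from both endpoints,
the separation hypothesis forces one of the two paths to avoid the `r`-ball about `γ τ`. A path
avoiding that ball crosses over `τ` at height about `r`, and by contraction its crossings over
positions `g = O(δ)` apart occur at least `m` steps apart along the path. Among the roughly
`d(x,y) / g` positions of a progression of step `g`, one path avoids at least half of the balls,
so its length is at least about `m · d(x,y) / (2g)`; this is `L · d(x,y)` for `m = 4⌈L⌉g`.
-/

open SimpleGraph

/-- A graph has uniformly bounded degree if there is a uniform finite bound on
the cardinality of all neighbour sets. -/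
def BddDegree {V : Type*} (G : SimpleGraph V) : Prop :=
  ∃ D : ℕ, ∀ v : V, (G.neighborSet v).encard ≤ D

/-- A walk is geodesic if its length realizes the graph distance between its endpoints. -/
def SimpleGraph.Walk.IsGeodesic {V : Type*} {G : SimpleGraph V} {x y : V}
    (w : G.Walk x y) : Prop :=
  w.length = G.dist x y

/-- A graph is `δ`-hyperbolic if each side of every geodesic triangle is contained in the
closed `δ`-neighbourhood of the union of the other two sides. -/
def GraphHyperbolic {V : Type*} (G : SimpleGraph V) (δ : ℝ) : Prop :=
  ∀ ⦃a b c : V⦄ (γ₁ : G.Walk a b) (γ₂ : G.Walk b c) (γ₃ : G.Walk c a),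
    γ₁.IsGeodesic → γ₂.IsGeodesic → γ₃.IsGeodesic →
      ∀ u ∈ γ₁.support, ∃ v, (v ∈ γ₂.support ∨ v ∈ γ₃.support) ∧ (G.dist u v : ℝ) ≤ δ

/-- `x` admits an `(L,s,C)`-bigon with respect to the basepoint `x₀`: two paths from `x₀`
to `x`, each of length at most `L·d(x₀,x)`, such that any vertex of the first path outside
the `C`-neighbourhood of `{x₀, x}` is at distance more than `s` from any vertex of the
second path outside that neighbourhood. -/
def IsBigonAt {V : Type*} (G : SimpleGraph V) (x₀ : V) (L s C : ℝ) (x : V) : Prop :=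
  ∃ α₁ α₂ : G.Walk x₀ x,
    ((α₁.length : ℝ) ≤ L * G.dist x₀ x) ∧ ((α₂.length : ℝ) ≤ L * G.dist x₀ x) ∧
    ∀ u ∈ α₁.support, ∀ v ∈ α₂.support,
      (C < (G.dist x₀ u : ℝ) ∧ C < (G.dist x u : ℝ)) →
      (C < (G.dist x₀ v : ℝ) ∧ C < (G.dist x v : ℝ)) →
      s < (G.dist u v : ℝ)

/-- The set `B^X(L,s,C)` of vertices admitting an `(L,s,C)`-bigon. -/
def bigonSet {V : Type*} (G : SimpleGraph V) (x₀ : V) (L s C : ℝ) : Set V :=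
  {x | IsBigonAt G x₀ L s C x}

/-- The closed ball of radius `n` about `x` in the graph metric. -/
def gBall {V : Type*} (G : SimpleGraph V) (x : V) (n : ℕ) : Set V :=
  {v | G.dist x v ≤ n}

/-- `X` has exponentially many fat bigons at `x₀`. -/
def HasExpManyFatBigons {V : Type*} (G : SimpleGraph V) (x₀ : V) : Prop :=
  ∃ s₀ c L : ℝ, 0 ≤ s₀ ∧ 1 < c ∧ 1 < L ∧
    ∀ s : ℝ, s₀ ≤ s → ∃ C : ℝ, 0 ≤ C ∧
      {n : ℕ | (c ^ n : ℝ) ≤ ((bigonSet G x₀ L s C ∩ gBall G x₀ n).ncard : ℝ)}.Infinite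

/-- `X` has no fat bigons at `x₀`. -/
def HasNoFatBigons {V : Type*} (G : SimpleGraph V) (x₀ : V) : Prop :=
  ∀ L : ℝ, 1 ≤ L → ∃ s : ℝ, 0 ≤ s ∧ ∀ C : ℝ, 0 ≤ C →
    ∃ R : ℕ, ∀ x ∈ bigonSet G x₀ L s C, G.dist x₀ x ≤ R

/-- A coarse embedding of the graph `G` into the graph `H`, with multiplicative constant `K`
and compression function `ρ`. -/
def IsCoarseEmbedding {V W : Type*} (G : SimpleGraph V) (H : SimpleGraph W)
    (f : V → W) (K : ℝ) (ρ : ℕ → ℕ) : Prop :=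
  1 ≤ K ∧ Filter.Tendsto ρ Filter.atTop Filter.atTop ∧
    ∀ x y : V, (ρ (G.dist x y) : ℝ) ≤ (H.dist (f x) (f y) : ℝ) ∧
      (H.dist (f x) (f y) : ℝ) ≤ K * (G.dist x y : ℝ)

/-- The Cayley graph of a group with respect to a (symmetric) set `S`. -/
def cayleyGraph (G : Type*) [Group G] (S : Set G) : SimpleGraph G :=
  SimpleGraph.fromRel (fun x y => x⁻¹ * y ∈ S)

/-- The Cayley graph of `G` w.r.t. the basepoint `1` has exponential growth:
`|B_n(1)|^(1/n)` converges to a limit `> 1`. -/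
def HasExpGrowth {V : Type*} (G : SimpleGraph V) (x₀ : V) : Prop :=
  ∃ a : ℝ, 1 < a ∧
    Filter.Tendsto (fun n : ℕ => ((gBall G x₀ n).ncard : ℝ) ^ ((n : ℝ)⁻¹))
      Filter.atTop (nhds a)

/-- `Div_X(n) ≤ M`: for all vertices `a b` with `d(a,b) ≤ n` and every `c ∉ {a, b}`, there is
a path from `a` to `b` of length at most `M` avoiding the ball around `c` of radius
`(1/2)·d(c,{a,b}) − 2`. -/
def DivLE {V : Type*} (G : SimpleGraph V) (n : ℕ) (M : ℝ) : Prop :=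
  ∀ a b c : V, G.dist a b ≤ n → c ≠ a → c ≠ b →
    ∃ w : G.Walk a b, (w.length : ℝ) ≤ M ∧
      ∀ u ∈ w.support, ((min (G.dist c a) (G.dist c b) : ℝ)) / 2 - 2 < (G.dist c u : ℝ)

/-- A group (given as a graph) is one-ended. -/
def OneEnded {V : Type*} (G : SimpleGraph V) : Prop :=
  ∃! e, e ∈ G.end

open Finset

theorem Nat.exists_le_le_add_of_succ_le_add {f : ℕ → ℕ} {n τ J : ℕ} (h0 : f 0 ≤ τ)
    (hn : τ ≤ f n) (hstep : ∀ i < n, f (i + 1) ≤ f i + J) :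
    ∃ i ≤ n, τ ≤ f i ∧ f i ≤ τ + J := by
  induction n with
  | zero => exact ⟨0, le_rfl, hn, by omega⟩
  | succ n ih =>
    by_cases h : τ ≤ f n
    · obtain ⟨i, hi, hfi⟩ := ih h fun i hi ↦ hstep i (by omega)
      exact ⟨i, by omega, hfi⟩
    · exact ⟨n + 1, le_rfl, hn, by have := hstep n (by omega); omega⟩

theorem Nat.mul_le_of_le_two_mul_of_mul_le_add {n d ℓ a g k c : ℕ} (hd : 4 * a + 4 * g ≤ d)
    (hdk : d < a + k * g + a) (hkc : k ≤ 2 * c) (hc : c * (4 * n * g) ≤ ℓ + 4 * n * g) :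
    n * d ≤ ℓ := by
  have := Nat.mul_le_mul_right (4 * n * g) hkc
  have := Nat.mul_le_mul_left n hdk.le
  have := Nat.mul_le_mul_left n hd
  nlinarith

theorem Finset.card_mul_le_of_lt_add_imp_eq {ι : Type*} (S : Finset ι) (f : ι → ℕ) {m n : ℕ}
    (hf : ∀ i ∈ S, f i ≤ n) (hsep : ∀ i ∈ S, ∀ j ∈ S, f i ≤ f j → f j < f i + m → i = j) :
    #S * m ≤ n + m := by
  have hmaps : Set.MapsTo (fun q : ι × ℕ ↦ f q.1 + q.2) ↑(S ×ˢ range m) ↑(range (n + m)) := by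
    rintro ⟨i, k⟩ hik
    simp only [coe_product, coe_range, Set.mem_prod, mem_coe, Set.mem_Iio] at hik ⊢
    have := hf i hik.1
    omega
  have hinj : Set.InjOn (fun q : ι × ℕ ↦ f q.1 + q.2) ↑(S ×ˢ range m) := by
    rintro ⟨i, k⟩ hik ⟨j, l⟩ hjl hkl
    simp only [coe_product, coe_range, Set.mem_prod, mem_coe, Set.mem_Iio] at hik hjl hkl
    obtain rfl : i = j := by
      rcases le_total (f i) (f j) with h | h
      · exact hsep i hik.1 j hjl.1 h (by omega)
      · exact (hsep j hjl.1 i hik.1 h (by omega)).symm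
    simp only [Prod.mk.injEq, true_and]
    omega
  simpa using card_le_card_of_injOn _ hmaps hinj

theorem Finset.le_two_mul_card_filter_or_le_two_mul_card_filter {ι : Type*} {s : Finset ι}
    {p q : ι → Prop} [DecidablePred p] [DecidablePred q] (h : ∀ i ∈ s, p i ∨ q i) :
    #s ≤ 2 * #(s.filter p) ∨ #s ≤ 2 * #(s.filter q) := by
  classical
  have : #s ≤ #(s.filter p) + #(s.filter q) :=
    calc #s = #(s.filter p ∪ s.filter q) := by rw [← filter_or, filter_true_of_mem h]
      _ ≤ #(s.filter p) + #(s.filter q) := card_union_le _ _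
  omega

namespace SimpleGraph.Walk

variable {V : Type*} {G : SimpleGraph V} {u v : V}

theorem dist_getVert_le_sub (w : G.Walk u v) {i j : ℕ} (hij : i ≤ j) :
    G.dist (w.getVert i) (w.getVert j) ≤ j - i := by
  have h := dist_le ((w.drop i).take (j - i))
  rw [take_length, drop_getVert, Nat.add_sub_cancel' hij] at h
  exact h.trans inf_le_left

theorem IsGeodesic.dist_getVert {w : G.Walk u v} (hw : w.IsGeodesic) {i j : ℕ} (hij : i ≤ j)
    (hj : j ≤ w.length) : G.dist (w.getVert i) (w.getVert j) = j - i := by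
  have h := length_eq_dist_of_subwalk hw
    (((w.drop i).isSubwalk_take (j - i)).trans (w.isSubwalk_drop i))
  rw [take_length, drop_length, drop_getVert, Nat.add_sub_cancel' hij] at h
  omega

theorem IsGeodesic.dist_start_getVert {w : G.Walk u v} (hw : w.IsGeodesic) {i : ℕ}
    (hi : i ≤ w.length) : G.dist u (w.getVert i) = i := by
  simpa using hw.dist_getVert (Nat.zero_le i) hi

theorem IsGeodesic.dist_getVert_end {w : G.Walk u v} (hw : w.IsGeodesic) {i : ℕ}
    (hi : i ≤ w.length) : G.dist (w.getVert i) v = w.length - i := by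
  simpa using hw.dist_getVert hi le_rfl

theorem IsGeodesic.dist_add_dist_of_mem_support {w : G.Walk u v} (hw : w.IsGeodesic) {z : V}
    (hz : z ∈ w.support) : G.dist u z + G.dist z v = G.dist u v := by
  classical
  rw [← length_eq_dist_of_subwalk hw (w.isSubwalk_takeUntil hz),
    ← length_eq_dist_of_subwalk hw (w.isSubwalk_dropUntil hz), ← length_append, take_spec]
  exact hw

noncomputable def nearestIndex (w : G.Walk u v) (z : V) : ℕ :=
  Function.argminOn (fun t ↦ G.dist z (w.getVert t)) (Set.Iic w.length) ⟨0, Nat.zero_le _⟩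

theorem nearestIndex_le_length (w : G.Walk u v) (z : V) : w.nearestIndex z ≤ w.length :=
  Function.argminOn_mem (fun t ↦ G.dist z (w.getVert t)) (Set.Iic w.length) _

theorem dist_getVert_nearestIndex_le (w : G.Walk u v) (z : V) {t : ℕ} (ht : t ≤ w.length) :
    G.dist z (w.getVert (w.nearestIndex z)) ≤ G.dist z (w.getVert t) :=
  Function.argminOn_le (fun t ↦ G.dist z (w.getVert t)) _ (Set.mem_Iic.mpr ht)

theorem IsGeodesic.nearestIndex_start {w : G.Walk u v} (hw : w.IsGeodesic) :
    w.nearestIndex u = 0 := by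
  have h := w.dist_getVert_nearestIndex_le u (Nat.zero_le _)
  rwa [getVert_zero, dist_self, Nat.le_zero, hw.dist_start_getVert (w.nearestIndex_le_length u)]
    at h

theorem IsGeodesic.nearestIndex_end {w : G.Walk u v} (hw : w.IsGeodesic) :
    w.nearestIndex v = w.length := by
  have h := w.dist_getVert_nearestIndex_le v le_rfl
  rw [getVert_length, dist_self, Nat.le_zero, dist_comm,
    hw.dist_getVert_end (w.nearestIndex_le_length v)] at h
  have := w.nearestIndex_le_length v
  omega

end SimpleGraph.Walk

open SimpleGraph

theorem GraphHyperbolic.mono {V : Type*} {G : SimpleGraph V} {δ δ' : ℝ}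
    (hG : GraphHyperbolic G δ) (hδ : δ ≤ δ') : GraphHyperbolic G δ' := by
  intro a b c γ₁ γ₂ γ₃ h₁ h₂ h₃ u hu
  obtain ⟨v, hv, hd⟩ := hG γ₁ γ₂ γ₃ h₁ h₂ h₃ u hu
  exact ⟨v, hv, hd.trans hδ⟩

theorem GraphHyperbolic.exists_dist_le_of_dist_add_dist_eq {V : Type*} {G : SimpleGraph V}
    {D : ℕ} (hG : GraphHyperbolic G D) (hconn : G.Connected) {a b m : V}
    (hm : G.dist a m + G.dist m b = G.dist a b) (c : V) :
    ∃ p, G.dist m p ≤ D ∧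
      (G.dist b p + G.dist p c = G.dist b c ∨ G.dist c p + G.dist p a = G.dist c a) := by
  obtain ⟨σ₁, hσ₁⟩ := hconn.exists_walk_length_eq_dist a m
  obtain ⟨σ₂, hσ₂⟩ := hconn.exists_walk_length_eq_dist m b
  obtain ⟨γ₂, hγ₂⟩ := hconn.exists_walk_length_eq_dist b c
  obtain ⟨γ₃, hγ₃⟩ := hconn.exists_walk_length_eq_dist c a
  have hγ₁ : (σ₁.append σ₂).IsGeodesic := by
    rw [Walk.IsGeodesic, Walk.length_append, hσ₁, hσ₂, hm]
  obtain ⟨p, hp, hmp⟩ := hG _ γ₂ γ₃ hγ₁ hγ₂ hγ₃ m (by simp)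
  exact ⟨p, by exact_mod_cast hmp,
    hp.imp (Walk.IsGeodesic.dist_add_dist_of_mem_support hγ₂)
      (Walk.IsGeodesic.dist_add_dist_of_mem_support hγ₃)⟩

namespace SimpleGraph.Walk.IsGeodesic

variable {V : Type*} {G : SimpleGraph V} {x y : V} {γ : G.Walk x y} {D : ℕ}

theorem exists_dist_getVert_le_of_nearestIndex_lt (hγ : γ.IsGeodesic) (hconn : G.Connected)
    (hG : GraphHyperbolic G D) {z z' : V} {c : ℕ} (hac : γ.nearestIndex z + 4 * D < c)
    (hcb : c + 2 * D < γ.nearestIndex z') :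
    ∃ p, G.dist z p + G.dist p z' = G.dist z z' ∧ G.dist (γ.getVert c) p ≤ 2 * D := by
  obtain ⟨a, ha⟩ : ∃ a, γ.nearestIndex z = a := ⟨_, rfl⟩
  obtain ⟨b, hb⟩ : ∃ b, γ.nearestIndex z' = b := ⟨_, rfl⟩
  have hbl : b ≤ γ.length := hb ▸ γ.nearestIndex_le_length z'
  have := hγ.dist_getVert (i := a) (j := c) (by omega) (by omega)
  have := hγ.dist_getVert (i := c) (j := b) (by omega) hbl
  have := hγ.dist_getVert (i := a) (j := b) (by omega) hbl
  have hz : G.dist z (γ.getVert a) ≤ G.dist z (γ.getVert c) :=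
    ha ▸ γ.dist_getVert_nearestIndex_le z (by omega)
  have hz' : G.dist z' (γ.getVert b) ≤ G.dist z' (γ.getVert c) :=
    hb ▸ γ.dist_getVert_nearestIndex_le z' (by omega)
  -- Thinness of the triangles `(γ a, γ b, z')` and `(z', γ a, z)` puts `γ c` near one of their
  -- sides; any side other than `[z, z']` would bring `γ c` closer to `z` than `γ a`, or closer
  -- to `z'` than `γ b`.
  obtain ⟨p₁, hcp₁, hp₁ | hp₁⟩ := hG.exists_dist_le_of_dist_add_dist_eq hconn
    (a := γ.getVert a) (b := γ.getVert b) (m := γ.getVert c) (by omega) z'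
  · exfalso
    have := hconn.dist_triangle (u := z') (v := p₁) (w := γ.getVert c)
    have := hconn.dist_triangle (u := γ.getVert c) (v := p₁) (w := γ.getVert b)
    have := G.dist_comm (u := z') (v := p₁)
    have := G.dist_comm (u := p₁) (v := γ.getVert c)
    have := G.dist_comm (u := p₁) (v := γ.getVert b)
    have := G.dist_comm (u := z') (v := γ.getVert b)
    omega
  obtain ⟨p₂, hp₁p₂, hp₂ | hp₂⟩ := hG.exists_dist_le_of_dist_add_dist_eq hconn hp₁ z
  · exfalso
    have := hconn.dist_triangle (u := γ.getVert c) (v := p₁) (w := p₂)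
    have := hconn.dist_triangle (u := z) (v := p₂) (w := γ.getVert c)
    have := hconn.dist_triangle (u := γ.getVert a) (v := p₂) (w := γ.getVert c)
    have := G.dist_comm (u := z) (v := p₂)
    have := G.dist_comm (u := p₂) (v := γ.getVert c)
    have := G.dist_comm (u := z) (v := γ.getVert a)
    omega
  · refine ⟨p₂, hp₂, ?_⟩
    have := hconn.dist_triangle (u := γ.getVert c) (v := p₁) (w := p₂)
    omega

theorem nearestIndex_le_add_of_dist_le_one (hγ : γ.IsGeodesic) (hconn : G.Connected)
    (hG : GraphHyperbolic G D) {z z' : V} (hzz' : G.dist z z' ≤ 1) :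
    γ.nearestIndex z' ≤ γ.nearestIndex z + (6 * D + 3) := by
  by_contra! h
  obtain ⟨p, hp, hcp⟩ := hγ.exists_dist_getVert_le_of_nearestIndex_lt hconn hG (z := z)
    (z' := z') (c := γ.nearestIndex z + 4 * D + 3) (by omega) (by omega)
  have hcl : γ.nearestIndex z + 4 * D + 3 ≤ γ.length :=
    (γ.nearestIndex_le_length z').trans' (by omega)
  have := hγ.dist_getVert (i := γ.nearestIndex z) (j := γ.nearestIndex z + 4 * D + 3)
    (by omega) hcl
  have := γ.dist_getVert_nearestIndex_le z hcl
  have := hconn.dist_triangle (u := γ.getVert (γ.nearestIndex z)) (v := z)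
    (w := γ.getVert (γ.nearestIndex z + 4 * D + 3))
  have := hconn.dist_triangle (u := z) (v := p) (w := γ.getVert (γ.nearestIndex z + 4 * D + 3))
  have := G.dist_comm (u := z) (v := γ.getVert (γ.nearestIndex z))
  have := G.dist_comm (u := p) (v := γ.getVert (γ.nearestIndex z + 4 * D + 3))
  omega

theorem nearestIndex_le_add_of_dist_add_lt (hγ : γ.IsGeodesic) (hconn : G.Connected)
    (hG : GraphHyperbolic G D) {z z' : V}
    (hzz' : G.dist z z' + 2 * D < G.dist z (γ.getVert (γ.nearestIndex z))) :
    γ.nearestIndex z' ≤ γ.nearestIndex z + (6 * D + 1) := by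
  by_contra! h
  obtain ⟨p, hp, hcp⟩ := hγ.exists_dist_getVert_le_of_nearestIndex_lt hconn hG (z := z)
    (z' := z') (c := γ.nearestIndex z + 4 * D + 1) (by omega) (by omega)
  have := γ.dist_getVert_nearestIndex_le z (t := γ.nearestIndex z + 4 * D + 1)
    ((γ.nearestIndex_le_length z').trans' (by omega))
  have := hconn.dist_triangle (u := z) (v := p) (w := γ.getVert (γ.nearestIndex z + 4 * D + 1))
  have := G.dist_comm (u := p) (v := γ.getVert (γ.nearestIndex z + 4 * D + 1))
  omega

theorem exists_getVert_nearestIndex_mem_Icc (hγ : γ.IsGeodesic) (hconn : G.Connected)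
    (hG : GraphHyperbolic G D) (β : G.Walk x y) {τ r : ℕ} (hτ : τ ≤ γ.length)
    (hβ : ∀ w ∈ β.support, r < G.dist w (γ.getVert τ)) :
    ∃ i ≤ β.length, τ ≤ γ.nearestIndex (β.getVert i) ∧
      γ.nearestIndex (β.getVert i) ≤ τ + (6 * D + 3) ∧
      r < G.dist (β.getVert i) (γ.getVert (γ.nearestIndex (β.getVert i))) + (6 * D + 3) := by
  obtain ⟨i, hi, hτi, hiτ⟩ := Nat.exists_le_le_add_of_succ_le_add
    (f := fun i ↦ γ.nearestIndex (β.getVert i)) (n := β.length)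
    (by simp [hγ.nearestIndex_start]) (by simpa [hγ.nearestIndex_end] using hτ)
    fun i _ ↦ hγ.nearestIndex_le_add_of_dist_le_one hconn hG
      ((β.dist_getVert_le_sub (Nat.le_succ i)).trans (by omega))
  refine ⟨i, hi, hτi, hiτ, ?_⟩
  have := hβ _ (β.getVert_mem_support i)
  have := hconn.dist_triangle (u := β.getVert i)
    (v := γ.getVert (γ.nearestIndex (β.getVert i))) (w := γ.getVert τ)
  have := hγ.dist_getVert hτi (γ.nearestIndex_le_length _)
  have := G.dist_comm (u := γ.getVert τ) (v := γ.getVert (γ.nearestIndex (β.getVert i)))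
  omega

/-- `12 * D + 5` exceeds the sum of the constants of `nearestIndex_le_add_of_dist_le_one` and
`nearestIndex_le_add_of_dist_add_lt`, and `m + 8 * D + 2` leaves the crossings of
`exists_getVert_nearestIndex_mem_Icc` at height at least `m + 2 * D`. -/
theorem card_mul_le_length_add (hγ : γ.IsGeodesic) (hconn : G.Connected)
    (hG : GraphHyperbolic G D) (β : G.Walk x y) {τ : ℕ → ℕ}
    (hτ : ∀ j j', j < j' → τ j + (12 * D + 5) ≤ τ j') {S : Finset ℕ} {m : ℕ}
    (hSγ : ∀ j ∈ S, τ j ≤ γ.length)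
    (hSβ : ∀ j ∈ S, ∀ w ∈ β.support, m + 8 * D + 2 < G.dist w (γ.getVert (τ j))) :
    #S * m ≤ β.length + m := by
  have hcross := fun j hj ↦
    hγ.exists_getVert_nearestIndex_mem_Icc hconn hG β (hSγ j hj) (hSβ j hj)
  choose! f hfβ hτf hfτ hfh using hcross
  refine S.card_mul_le_of_lt_add_imp_eq f hfβ fun j hj j' hj' hle hlt ↦ ?_
  have := β.dist_getVert_le_sub hle
  have := hγ.nearestIndex_le_add_of_dist_add_lt hconn hG (z := β.getVert (f j))
    (z' := β.getVert (f j')) (by have := hfh j hj; omega)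
  have := hγ.nearestIndex_le_add_of_dist_add_lt hconn hG (z := β.getVert (f j'))
    (z' := β.getVert (f j)) (by have := hfh j' hj'; rw [G.dist_comm]; omega)
  have := hτf j hj
  have := hτf j' hj'
  have := hfτ j hj
  have := hfτ j' hj'
  by_contra hne
  rcases Nat.lt_or_gt_of_ne hne with h | h
  · have := hτ _ _ h
    omega
  · have := hτ _ _ h
    omega

theorem forall_lt_dist_getVert_or_forall_lt_dist_getVert (hγ : γ.IsGeodesic)
    (hconn : G.Connected) {α₁ α₂ : G.Walk x y} {C s : ℝ} {r a τ : ℕ}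
    (hsep : ∀ u ∈ α₁.support, ∀ v ∈ α₂.support,
      (C < (G.dist x u : ℝ) ∧ C < (G.dist y u : ℝ)) →
      (C < (G.dist x v : ℝ) ∧ C < (G.dist y v : ℝ)) → s ≤ (G.dist u v : ℝ))
    (hs : 2 * r < s) (hCa : C + r < a) (haτ : a ≤ τ) (hτa : τ + a ≤ γ.length) :
    (∀ w ∈ α₁.support, r < G.dist w (γ.getVert τ)) ∨
      (∀ w ∈ α₂.support, r < G.dist w (γ.getVert τ)) := by
  by_contra! h
  obtain ⟨⟨u, hu, huτ⟩, ⟨v, hv, hvτ⟩⟩ := h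
  have := hγ.dist_start_getVert (i := τ) (by omega)
  have := hγ.dist_getVert_end (i := τ) (by omega)
  have hfar : ∀ w, G.dist w (γ.getVert τ) ≤ r → C < G.dist x w ∧ C < G.dist y w := by
    intro w hw
    have := hconn.dist_triangle (u := x) (v := w) (w := γ.getVert τ)
    have := hconn.dist_triangle (u := γ.getVert τ) (v := w) (w := y)
    have := G.dist_comm (u := γ.getVert τ) (v := w)
    have := G.dist_comm (u := w) (v := y)
    have hx : (a : ℝ) ≤ G.dist x w + r := by exact_mod_cast (by omega : a ≤ G.dist x w + r)
    have hy : (a : ℝ) ≤ G.dist y w + r := by exact_mod_cast (by omega : a ≤ G.dist y w + r)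
    constructor <;> linarith
  have := hconn.dist_triangle (u := u) (v := γ.getVert τ) (w := v)
  have := G.dist_comm (u := γ.getVert τ) (v := v)
  have huv : (G.dist u v : ℝ) ≤ 2 * r := by exact_mod_cast (by omega : G.dist u v ≤ 2 * r)
  linarith [hsep u hu v hv (hfar u huτ) (hfar v hvτ)]

end SimpleGraph.Walk.IsGeodesic

theorem far_apart_paths_one_is_long_general
    {V : Type*} (X : SimpleGraph V) (hXconn : X.Connected)
    (δ : ℝ) (hX : GraphHyperbolic X δ) :
    ∀ L : ℝ, 1 ≤ L → ∃ s : ℝ, 0 ≤ s ∧ ∀ C : ℝ, 0 ≤ C → ∃ n : ℕ,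
      ∀ (x y : V), (n : ℝ) ≤ (X.dist x y : ℝ) →
        ∀ (α₁ α₂ : X.Walk x y),
          (∀ u ∈ α₁.support, ∀ v ∈ α₂.support,
            (C < (X.dist x u : ℝ) ∧ C < (X.dist y u : ℝ)) →
            (C < (X.dist x v : ℝ) ∧ C < (X.dist y v : ℝ)) →
            s ≤ (X.dist u v : ℝ)) →
          (L * (X.dist x y : ℝ) ≤ (α₁.length : ℝ) ∨ L * (X.dist x y : ℝ) ≤ (α₂.length : ℝ)) := by
  classical
  intro L _
  set D := ⌈δ⌉₊
  have hD : GraphHyperbolic X D := hX.mono (Nat.le_ceil δ)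
  set g := 12 * D + 5
  set m := 4 * ⌈L⌉₊ * g
  set r := m + 8 * D + 2
  refine ⟨2 * r + 1, by positivity, fun C _ ↦ ?_⟩
  set a := ⌈C⌉₊ + r + 1
  have hCa : C + r < a := by push_cast [a]; linarith [Nat.le_ceil C]
  refine ⟨4 * a + 4 * g, fun x y hxy α₁ α₂ hsep ↦ ?_⟩
  replace hxy : 4 * a + 4 * g ≤ X.dist x y := by exact_mod_cast hxy
  obtain ⟨γ, hγ⟩ : ∃ γ : X.Walk x y, γ.IsGeodesic := hXconn.exists_walk_length_eq_dist x y
  have hγd : γ.length = X.dist x y := hγ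
  have hk : ∃ k, X.dist x y < a + k * g + a :=
    ⟨X.dist x y + 1, by nlinarith [show 1 ≤ g by omega]⟩
  obtain ⟨k, hkd, hdk⟩ : ∃ k, (∀ j < k, a + j * g + a ≤ X.dist x y) ∧ X.dist x y < a + k * g + a :=
    ⟨Nat.find hk, fun j hj ↦ not_lt.mp (Nat.find_min hk hj), Nat.find_spec hk⟩
  have hlong : ∀ β : X.Walk x y, k ≤ 2 * #((range k).filter fun j ↦
      ∀ w ∈ β.support, r < X.dist w (γ.getVert (a + j * g))) → L * X.dist x y ≤ β.length := by
    intro β hkβ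
    have hcount := hγ.card_mul_le_length_add hXconn hD β (τ := fun j ↦ a + j * g)
      (fun j j' h ↦ by show a + j * g + g ≤ a + j' * g; nlinarith [Nat.mul_le_mul_right g h])
      (m := m) (fun j hj ↦ by have := hkd j (mem_range.mp (mem_filter.mp hj).1); omega)
      fun j hj ↦ (mem_filter.mp hj).2
    calc L * X.dist x y ≤ ⌈L⌉₊ * X.dist x y := by gcongr; exact Nat.le_ceil L
      _ ≤ β.length := by exact_mod_cast Nat.mul_le_of_le_two_mul_of_mul_le_add hxy hdk hkβ hcount
  have hcover := le_two_mul_card_filter_or_le_two_mul_card_filter fun j hj ↦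
    hγ.forall_lt_dist_getVert_or_forall_lt_dist_getVert hXconn hsep (by linarith) hCa
      (Nat.le_add_right a (j * g)) (by have := hkd j (mem_range.mp hj); omega)
  rw [card_range] at hcover
  exact hcover.imp (hlong α₁) (hlong α₂)

/-- (Claim 3.) In a `δ`-hyperbolic connected graph, for every `L ≥ 1` there
is `s ≥ 0` such that for every `C ≥ 0` there is `n` with: whenever `d(x,y) ≥ n` and
`α₁, α₂` are paths from `x` to `y` whose vertices outside `B = N_C({x,y})` are pairwise at
distance at least `s`, one of the two paths has length at least `L·d(x,y)`. -/
theorem far_apart_paths_one_is_long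
    {V : Type*} (X : SimpleGraph V) (hXconn : X.Connected)
    (δ : ℝ) (hδ : 1 ≤ δ) (hX : GraphHyperbolic X δ) :
    ∀ L : ℝ, 1 ≤ L → ∃ s : ℝ, 0 ≤ s ∧ ∀ C : ℝ, 0 ≤ C → ∃ n : ℕ,
      ∀ (x y : V), (n : ℝ) ≤ (X.dist x y : ℝ) →
        ∀ (α₁ α₂ : X.Walk x y),
          (∀ u ∈ α₁.support, ∀ v ∈ α₂.support,
            (C < (X.dist x u : ℝ) ∧ C < (X.dist y u : ℝ)) →
            (C < (X.dist x v : ℝ) ∧ C < (X.dist y v : ℝ)) →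
            s ≤ (X.dist u v : ℝ)) →
          (L * (X.dist x y : ℝ) ≤ (α₁.length : ℝ) ∨ L * (X.dist x y : ℝ) ≤ (α₂.length : ℝ)) :=
  far_apart_paths_one_is_long_general X hXconn δ hX
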